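/- arXiv:math/0610042 — 2 statements merged into one kernel-verified Lean document; each statement's English description precedes it below -/
import Mathlib

section
/- For any positive integer k, the double integral of 1/(x−y)² over x ∈ [−1,0] and y ∈ [k, k+1] equals ln(1 + 1/(k(k+2))). -/
/-
Integrating first in `y`, the antiderivative `1 / (x - y)` of `1 / (x - y) ^ 2` leaves
`∫ x in -1..0, (1 / (x - (k + 1)) - 1 / (x - k))`, a difference of two logarithmic integrals whose
value is `log ((k + 1) / (k + 2)) - log (k / (k + 1)) = log ((k + 1) ^ 2 / (k * (k + 2)))`.
-/

open Set Real intervalIntegral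

lemma hasDerivAt_one_div_const_sub {x y : ℝ} (h : x ≠ y) :
    HasDerivAt (fun y => 1 / (x - y)) (1 / (x - y) ^ 2) y := by
  simpa [one_div] using ((hasDerivAt_id y).const_sub x).fun_inv (sub_ne_zero.2 h)

lemma integral_one_div_const_sub_sq {a b x : ℝ} (hx : x ∉ uIcc a b) :
    ∫ y in a..b, 1 / (x - y) ^ 2 = 1 / (x - b) - 1 / (x - a) := by
  have hne : ∀ y ∈ uIcc a b, x ≠ y := fun y hy h => hx (h ▸ hy)
  refine integral_eq_sub_of_hasDerivAt (fun y hy => hasDerivAt_one_div_const_sub (hne y hy)) ?_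
  exact intervalIntegrable_one_div (fun y hy => pow_ne_zero 2 (sub_ne_zero.2 (hne y hy)))
    (by fun_prop)

lemma intervalIntegrable_one_div_sub_const {a b c : ℝ} (hc : c ∉ uIcc a b) :
    IntervalIntegrable (fun x => 1 / (x - c)) MeasureTheory.volume a b :=
  intervalIntegrable_one_div (fun x hx => sub_ne_zero.2 fun h => hc (h ▸ hx)) (by fun_prop)

lemma integral_one_div_sub_const {a b c : ℝ} (hc : c ∉ uIcc a b) :
    ∫ x in a..b, 1 / (x - c) = log ((b - c) / (a - c)) := by
  rw [integral_comp_sub_right (fun u => 1 / u), integral_one_div]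
  intro h
  exact hc (by simpa [mem_uIcc, sub_nonpos, sub_nonneg, and_comm] using h)

theorem stmt_0 (k : ℕ) (hk : 0 < k) :
    ∫ x in (-1:ℝ)..0, ∫ y in (k:ℝ)..(k+1), 1 / (x - y)^2
      = Real.log (1 + 1 / ((k:ℝ) * (k + 2))) := by
  replace hk : (0:ℝ) < k := by exact_mod_cast hk
  have hout : ∀ c : ℝ, 0 < c → c ∉ uIcc (-1:ℝ) 0 := fun c hc h => by
    rw [uIcc_of_le (by norm_num)] at h
    linarith [h.2]
  have hinner : EqOn (fun x => ∫ y in (k:ℝ)..(k+1), 1 / (x - y) ^ 2)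
      (fun x => 1 / (x - (k + 1)) - 1 / (x - k)) (uIcc (-1) 0) := fun x hx => by
    refine integral_one_div_const_sub_sq fun h => ?_
    rw [uIcc_of_le (by linarith)] at h
    rw [uIcc_of_le (by norm_num)] at hx
    linarith [h.1, hx.2]
  have hk1 : (0:ℝ) < k + 1 := by positivity
  rw [integral_congr hinner, integral_sub (intervalIntegrable_one_div_sub_const (hout _ hk1))
    (intervalIntegrable_one_div_sub_const (hout _ hk)), integral_one_div_sub_const (hout _ hk1),
    integral_one_div_sub_const (hout _ hk), ← log_div
    (div_pos_of_neg_of_neg (by linarith) (by linarith)).ne'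
    (div_pos_of_neg_of_neg (by linarith) (by linarith)).ne']
  have : (-1:ℝ) - k ≠ 0 := by linarith
  have : (-1:ℝ) - (k + 1) ≠ 0 := by linarith
  congr 1
  field_simp [hk.ne']
  ring
end

section
/- The function F(k) = ∫_{−1}^{0} ∫_{k}^{k+1} dx dy/(x−y)² satisfies F(k) = ln((k+1)²/(k(k+2))) for every positive integer k, and Σ_{k=1}^{∞} F(k) = ln 2. -/
/-!
Integrating `y ↦ (x - y)⁻²` gives `(c - x)⁻¹ - (d - x)⁻¹`, so the double integral over
`[a, b] × [c, d]` is the logarithm of the cross-ratio `(c - a)(d - b) / ((c - b)(d - a))`.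
For `[-1, 0] × [k, k + 1]` this is `G k - G (k + 1)` with `G t = log (1 + 1 / t)`, and since
`G` decreases to `0` the series telescopes to `G 1 = log 2`.
-/

open Real Filter Topology Set intervalIntegral
open scoped Interval

theorem integral_one_div_sub_sq {x a b : ℝ} (hx : x ∉ [[a, b]]) :
    ∫ y in a..b, 1 / (x - y) ^ 2 = (x - b)⁻¹ - (x - a)⁻¹ := by
  have hne : ∀ y ∈ [[a, b]], x - y ≠ 0 := fun y hy h => hx (sub_eq_zero.1 h ▸ hy)
  refine integral_eq_sub_of_hasDerivAt (f := fun y => (x - y)⁻¹) (fun y hy => ?_) ?_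
  · simpa using ((hasDerivAt_id' y).const_sub x).fun_inv (hne y hy)
  · exact (continuousOn_const.div ((continuousOn_const.sub continuousOn_id).pow 2)
      fun y hy => pow_ne_zero 2 (hne y hy)).intervalIntegrable

theorem integral_inv_const_sub {a b c : ℝ} (hc : c ∉ [[a, b]]) :
    ∫ x in a..b, (c - x)⁻¹ = log ((c - a) / (c - b)) := by
  rw [integral_comp_sub_left (fun x => x⁻¹) c, integral_inv]
  intro h0
  apply hc
  rw [mem_uIcc] at h0 ⊢
  rcases h0 with h0 | h0 <;> [left; right] <;> constructor <;> linarith [h0.1, h0.2]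

theorem intervalIntegrable_inv_const_sub {a b c : ℝ} (hc : c ∉ [[a, b]]) :
    IntervalIntegrable (fun x => (c - x)⁻¹) MeasureTheory.volume a b :=
  ContinuousOn.intervalIntegrable <| (continuousOn_const.sub continuousOn_id).inv₀
    fun x hx (h : c - x = 0) => hc (sub_eq_zero.1 h ▸ hx)

theorem integral_integral_one_div_sub_sq {a b c d : ℝ} (h : Disjoint [[a, b]] [[c, d]]) :
    ∫ x in a..b, ∫ y in c..d, 1 / (x - y) ^ 2 =
      log ((c - a) / (c - b)) - log ((d - a) / (d - b)) := by
  have hc : c ∉ [[a, b]] := h.notMem_of_mem_right left_mem_uIcc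
  have hd : d ∉ [[a, b]] := h.notMem_of_mem_right right_mem_uIcc
  have inner : ∀ x ∈ [[a, b]], ∫ y in c..d, 1 / (x - y) ^ 2 = (c - x)⁻¹ - (d - x)⁻¹ := by
    intro x hx
    rw [integral_one_div_sub_sq (h.notMem_of_mem_left hx), ← neg_sub c x, ← neg_sub d x,
      inv_neg, inv_neg]
    ring
  rw [integral_congr inner, integral_sub (intervalIntegrable_inv_const_sub hc)
    (intervalIntegrable_inv_const_sub hd), integral_inv_const_sub hc, integral_inv_const_sub hd]

theorem integral_neg_one_zero_integral_one_div_sub_sq {k : ℝ} (hk : 0 < k) :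
    ∫ x in (-1 : ℝ)..0, ∫ y in k..(k + 1), 1 / (x - y) ^ 2 =
      log (1 + 1 / k) - log (1 + 1 / (k + 1)) := by
  have hdisj : Disjoint [[(-1 : ℝ), 0]] [[k, k + 1]] := by
    rw [uIcc_of_le (by norm_num), uIcc_of_le (by linarith)]
    exact disjoint_left.2 fun x hx hy => by linarith [hx.2, hy.1]
  have hk0 : k ≠ 0 := hk.ne'
  have hk1 : k + 1 ≠ 0 := by positivity
  rw [integral_integral_one_div_sub_sq hdisj]
  congr 2 <;> field_simp <;> ring

theorem Antitone.hasSum_sub_succ {f : ℕ → ℝ} {l : ℝ} (hf : Antitone f)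
    (hl : Tendsto f atTop (𝓝 l)) : HasSum (fun n => f n - f (n + 1)) (f 0 - l) := by
  refine (hasSum_iff_tendsto_nat_of_nonneg (fun n => sub_nonneg.2 (hf n.le_succ)) _).2 ?_
  simp_rw [Finset.sum_range_sub']
  exact tendsto_const_nhds.sub hl

theorem hasSum_log_one_add_one_div_sub :
    HasSum (fun n : ℕ => log (1 + 1 / ((n : ℝ) + 1)) - log (1 + 1 / ((n : ℝ) + 1 + 1)))
      (log 2) := by
  set f : ℕ → ℝ := fun n => log (1 + 1 / ((n : ℝ) + 1))
  have hf : Antitone f := fun m n hmn => log_le_log (by positivity) (by gcongr)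
  have hf0 : Tendsto f atTop (𝓝 0) := by
    have := (continuousAt_log (by norm_num : (1 : ℝ) + 0 ≠ 0)).tendsto.comp
      ((tendsto_one_div_add_atTop_nhds_zero_nat (𝕜 := ℝ)).const_add 1)
    simpa [f, Function.comp_def] using this
  convert hf.hasSum_sub_succ hf0 using 1
  · simp only [f, Nat.cast_add, Nat.cast_one]
  · norm_num [f]

theorem stmt_19 :
    let F : ℕ → ℝ := fun k => ∫ x in (-1:ℝ)..0, ∫ y in (k:ℝ)..(k+1), 1 / (x - y)^2
    (∀ k : ℕ, 0 < k →
      F k = Real.log (((k:ℝ) + 1)^2 / ((k:ℝ) * (k + 2)))) ∧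
    ∑' k : ℕ, F (k + 1) = Real.log 2 := by
  intro F
  have hF : ∀ k : ℕ, 0 < k → F k = log (1 + 1 / k) - log (1 + 1 / (k + 1)) := fun k hk =>
    integral_neg_one_zero_integral_one_div_sub_sq (by exact_mod_cast hk)
  refine ⟨fun k hk => ?_, ?_⟩
  · have hk' : (0 : ℝ) < k := by exact_mod_cast hk
    rw [hF k hk, ← log_div (by positivity) (by positivity)]
    congr 1
    field_simp
    ring
  · have hterm : (fun n => F (n + 1)) =
        fun n : ℕ => log (1 + 1 / ((n : ℝ) + 1)) - log (1 + 1 / ((n : ℝ) + 1 + 1)) := by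
      ext n
      rw [hF (n + 1) (by positivity)]
      push_cast
      rfl
    rw [hterm, hasSum_log_one_add_one_div_sub.tsum_eq]
end
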